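/- arXiv:2501.16046 — 3 statements merged into one kernel-verified Lean document; each statement's English description precedes it below -/
import Mathlib

section
/- Let T ≥ 1, let K ⊆ ℝ^d be convex, and for t = 1,…,T let f_t, g_t : K → ℝ and x_t ∈ K. Set g_t⁺(x) = max{0, g_t(x)}, Q₀ = 0 and Q_t = Q_{t−1} + g_t⁺(x_t). Let Φ : [0,∞) → ℝ be a Lyapunov function (convex, differentiable, nonnegative, nondecreasing, Φ(0) = 0), let β, γ > 0, and define the surrogate loss f̃_t(x) = γβ f_t(x) + β Φ'(βQ_t) g_t⁺(x). Then for every x* ∈ K satisfying g_t(x*) ≤ 0 for all t = 1,…,T, one has ∑_{t=1}^T (f̃_t(x_t) − f̃_t(x*)) ≥ γβ ∑_{t=1}^T (f_t(x_t) − f_t(x*)) + Φ(βQ_T). -/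
/-- Gradient inequality for a convex differentiable function on `[0, ∞)`. -/
lemma grad_ineq_aux {Φ Φ' : ℝ → ℝ} (hc : ConvexOn ℝ (Set.Ici 0) Φ)
    (hd : ∀ z ∈ Set.Ici (0 : ℝ), HasDerivWithinAt Φ (Φ' z) (Set.Ici 0) z)
    {a b : ℝ} (ha : 0 ≤ a) (hab : a ≤ b) : Φ b - Φ a ≤ Φ' b * (b - a) := by
  rcases eq_or_lt_of_le hab with rfl | h
  · simp
  · have hb : (0 : ℝ) ≤ b := ha.trans hab
    have hs := hc.slope_le_of_hasDerivWithinAt ha hb h (hd b hb)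
    rw [slope_def_field] at hs
    have hba : 0 < b - a := sub_pos.mpr h
    have := mul_le_mul_of_nonneg_right hs hba.le
    calc Φ b - Φ a = (Φ b - Φ a) / (b - a) * (b - a) := by field_simp
      _ ≤ Φ' b * (b - a) := this



/-- **surrogate regret lower bound.** With `Q_t` the cumulative constraint
violation, `Φ` a Lyapunov function, and surrogate losses
`f̃_t(x) = γβ f_t(x) + β Φ'(βQ_t) g_t⁺(x)`, for every comparator `x*` that is feasible at
all rounds one has
`∑ (f̃_t(x_t) − f̃_t(x*)) ≥ γβ ∑ (f_t(x_t) − f_t(x*)) + Φ(βQ_T)`. -/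
theorem surrogate_regret_lower_bound
    {d : ℕ} (T : ℕ) (hT : 1 ≤ T)
    (K : Set (EuclideanSpace ℝ (Fin d))) (hK : Convex ℝ K)
    (f g : ℕ → EuclideanSpace ℝ (Fin d) → ℝ)
    (x : ℕ → EuclideanSpace ℝ (Fin d)) (hx : ∀ t ∈ Finset.Icc 1 T, x t ∈ K)
    (Q : ℕ → ℝ) (hQ0 : Q 0 = 0)
    (hQ : ∀ t ∈ Finset.Icc 1 T, Q t = Q (t - 1) + max 0 (g t (x t)))
    (Φ Φ' : ℝ → ℝ)
    (hΦconv : ConvexOn ℝ (Set.Ici 0) Φ)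
    (hΦdiff : ∀ z ∈ Set.Ici (0 : ℝ), HasDerivWithinAt Φ (Φ' z) (Set.Ici 0) z)
    (hΦnonneg : ∀ z ∈ Set.Ici (0 : ℝ), 0 ≤ Φ z)
    (hΦmono : MonotoneOn Φ (Set.Ici 0))
    (hΦ0 : Φ 0 = 0)
    (β γ : ℝ) (hβ : 0 < β) (hγ : 0 < γ)
    (ftil : ℕ → EuclideanSpace ℝ (Fin d) → ℝ)
    (hftil : ∀ t, ∀ y, ftil t y = γ * β * f t y + β * Φ' (β * Q t) * max 0 (g t y)) :
    ∀ xstar ∈ K, (∀ t ∈ Finset.Icc 1 T, g t xstar ≤ 0) →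
      ∑ t ∈ Finset.Icc 1 T, (ftil t (x t) - ftil t xstar) ≥
        γ * β * ∑ t ∈ Finset.Icc 1 T, (f t (x t) - f t xstar) + Φ (β * Q T) := by
  intro xstar hxs hgstar
  have hQnn : ∀ t, t ≤ T → 0 ≤ Q t := by
    intro t
    induction t with
    | zero => intro _; rw [hQ0]
    | succ n ih =>
      intro h
      have hmem : n + 1 ∈ Finset.Icc 1 T := Finset.mem_Icc.mpr ⟨Nat.succ_le_succ (Nat.zero_le n), h⟩
      rw [hQ (n + 1) hmem]
      simp only [Nat.add_sub_cancel]
      exact add_nonneg (ih (le_trans (Nat.le_succ n) h)) (le_max_left _ _)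
  have hstep : ∀ t ∈ Finset.Icc 1 T,
      Φ (β * Q t) - Φ (β * Q (t - 1)) ≤ β * Φ' (β * Q t) * max 0 (g t (x t)) := by
    intro t ht
    obtain ⟨h1, h2⟩ := Finset.mem_Icc.mp ht
    have hQt : Q t = Q (t - 1) + max 0 (g t (x t)) := hQ t ht
    have ha : 0 ≤ β * Q (t - 1) := mul_nonneg hβ.le (hQnn _ (le_trans (Nat.sub_le t 1) h2))
    have hm : 0 ≤ max 0 (g t (x t)) := le_max_left _ _
    have hab : β * Q (t - 1) ≤ β * Q t := by nlinarith
    have hkey := grad_ineq_aux hΦconv hΦdiff ha hab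
    have heq : β * Q t - β * Q (t - 1) = β * (max 0 (g t (x t))) := by rw [hQt]; ring
    rw [heq] at hkey
    calc Φ (β * Q t) - Φ (β * Q (t - 1)) ≤ Φ' (β * Q t) * (β * max 0 (g t (x t))) := hkey
      _ = β * Φ' (β * Q t) * max 0 (g t (x t)) := by ring
  have htel : ∑ t ∈ Finset.Icc 1 T, (Φ (β * Q t) - Φ (β * Q (t - 1))) = Φ (β * Q T) - Φ (β * Q 0) := by
    have gen : ∀ n, n ≤ T → ∑ t ∈ Finset.Icc 1 n, (Φ (β * Q t) - Φ (β * Q (t - 1)))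
        = Φ (β * Q n) - Φ (β * Q 0) := by
      intro n
      induction n with
      | zero => intro _; simp
      | succ m ih =>
        intro h
        rw [Finset.sum_Icc_succ_top (Nat.succ_le_succ (Nat.zero_le m)),
          ih (le_trans (Nat.le_succ m) h)]
        simp only [Nat.add_sub_cancel]
        ring
    exact gen T le_rfl
  have hsum : Φ (β * Q T) ≤ ∑ t ∈ Finset.Icc 1 T, β * Φ' (β * Q t) * max 0 (g t (x t)) := by
    have := Finset.sum_le_sum hstep
    rw [htel, hQ0, mul_zero, hΦ0, sub_zero] at this
    exact this
  have hterm : ∀ t ∈ Finset.Icc 1 T, ftil t (x t) - ftil t xstar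
      = γ * β * (f t (x t) - f t xstar) + β * Φ' (β * Q t) * max 0 (g t (x t)) := by
    intro t ht
    have hgs : max 0 (g t xstar) = 0 := max_eq_left (hgstar t ht)
    rw [hftil t (x t), hftil t xstar, hgs]
    ring
  rw [Finset.sum_congr rfl hterm, Finset.sum_add_distrib, ← Finset.mul_sum]
  linarith
end

section
/- Let K ⊆ ℝ^d be a convex compact set with ‖x − y‖₂ ≤ D for all x, y ∈ K, let x_s ∈ K, η > 0, and let g₁,…,g_n ∈ ℝ^d. For 0 ≤ j ≤ n define F_j(x) = η ∑_{i=1}^{j} ⟨g_i, x⟩ + ‖x − x_s‖₂², and for 1 ≤ j ≤ n let x*_j ∈ K be a minimizer of F_{j−1} over K. Then for every x* ∈ K, ∑_{j=1}^{n} ⟨g_j, x*_j − x*⟩ ≤ D²/η + η ∑_{j=1}^{n} ‖g_j‖₂². -/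
/-!
Write `F_j(y) = ⟪c_j, y⟫ + ‖y - x_s‖²` with `c_j = η ∑_{i ≤ j} g_i`. First-order optimality of
the minimizer `x*_j` of `F_{j-1}` on the convex set `K` upgrades minimality to the quadratic growth
`F_{j-1}(x*_j) + ‖y - x*_j‖² ≤ F_{j-1}(y)`, and Cauchy–Schwarz then absorbs the new loss:
`F_{j-1}(x*_j) + η⟪g_j, x*_j⟫ - η²‖g_j‖²/4 ≤ F_j(y)` for every `y ∈ K`. Chaining these bounds
with `y = x*_{j+1}`, and with `y = x*` in the last round, telescopes to
`η ∑ ⟪g_j, x*_j - x*⟫ ≤ ‖x* - x_s‖² + (η²/4) ∑ ‖g_j‖²`.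
-/
open Finset RealInnerProductSpace

variable {E : Type*} [NormedAddCommGroup E] [InnerProductSpace ℝ E] {K : Set E}

theorem IsMinOn.inner_sub_add_two_inner_sub_nonneg (hK : Convex ℝ K) {c a x y : E} (hx : x ∈ K)
    (hmin : IsMinOn (fun y => ⟪c, y⟫ + ‖y - a‖ ^ 2) K x) (hy : y ∈ K) :
    0 ≤ ⟪c, y - x⟫ + 2 * ⟪x - a, y - x⟫ := by
  have hderiv := (innerSL ℝ c).hasFDerivAt.add ((hasFDerivAt_id x).sub_const a).norm_sq
  have hcone : y - x ∈ posTangentConeAt K x :=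
    mem_posTangentConeAt_of_segment_subset (by simpa using hK.segment_subset hx hy)
  simpa [inner_sub_left] using
    hmin.localize.hasFDerivWithinAt_nonneg hderiv.hasFDerivWithinAt hcone

theorem IsMinOn.inner_add_norm_sub_sq_add_norm_sub_sq_le (hK : Convex ℝ K) {c a x y : E}
    (hx : x ∈ K) (hmin : IsMinOn (fun y => ⟪c, y⟫ + ‖y - a‖ ^ 2) K x) (hy : y ∈ K) :
    ⟪c, x⟫ + ‖x - a‖ ^ 2 + ‖y - x‖ ^ 2 ≤ ⟪c, y⟫ + ‖y - a‖ ^ 2 := by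
  have hfirst := hmin.inner_sub_add_two_inner_sub_nonneg hK hx hy
  have hexpand : ‖y - a‖ ^ 2 = ‖x - a‖ ^ 2 + 2 * ⟪x - a, y - x⟫ + ‖y - x‖ ^ 2 := by
    rw [← norm_add_sq_real, sub_add_sub_cancel']
  rw [inner_sub_right] at hfirst
  linarith

theorem IsMinOn.inner_add_norm_sub_sq_add_inner_le (hK : Convex ℝ K) {c a x : E} (g : E)
    (hx : x ∈ K) (hmin : IsMinOn (fun y => ⟪c, y⟫ + ‖y - a‖ ^ 2) K x) {y : E} (hy : y ∈ K) :
    ⟪c, x⟫ + ‖x - a‖ ^ 2 + (⟪g, x⟫ - ‖g‖ ^ 2 / 4) ≤ ⟪c + g, y⟫ + ‖y - a‖ ^ 2 := by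
  have hstrong := hmin.inner_add_norm_sub_sq_add_norm_sub_sq_le hK hx hy
  have hstable : ⟪g, x - y⟫ ≤ ‖g‖ ^ 2 / 4 + ‖y - x‖ ^ 2 := by
    have := real_inner_le_norm g (x - y)
    rw [norm_sub_rev] at this
    nlinarith [sq_nonneg (‖g‖ - 2 * ‖y - x‖)]
  rw [inner_sub_right] at hstable
  rw [inner_add_left]
  linarith

theorem ftrl_sum_inner_sub_norm_sq_div_four_le (hK : Convex ℝ K) (a : E) (g x : ℕ → E) (n : ℕ)
    (hx : ∀ j ∈ Icc 1 n,
      x j ∈ K ∧ IsMinOn (fun y => ⟪∑ i ∈ Icc 1 (j - 1), g i, y⟫ + ‖y - a‖ ^ 2) K (x j)) :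
    ∀ m ≤ n, ∀ y ∈ K,
      ∑ j ∈ Icc 1 m, (⟪g j, x j⟫ - ‖g j‖ ^ 2 / 4) ≤ ⟪∑ i ∈ Icc 1 m, g i, y⟫ + ‖y - a‖ ^ 2 := by
  intro m
  induction m with
  | zero => intro _ y _; simp
  | succ m ih =>
    intro hm y hy
    obtain ⟨hxK, hxmin⟩ := hx (m + 1) (mem_Icc.mpr ⟨by omega, hm⟩)
    rw [Nat.add_sub_cancel] at hxmin
    have hstep := hxmin.inner_add_norm_sub_sq_add_inner_le hK (g (m + 1)) hxK hy
    rw [sum_Icc_succ_top (by omega), sum_Icc_succ_top (by omega)]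
    linarith [ih (by omega) (x (m + 1)) hxK]

theorem ftrl_regret_le (hK : Convex ℝ K) (a : E) (g x : ℕ → E) (n : ℕ)
    (hx : ∀ j ∈ Icc 1 n,
      x j ∈ K ∧ IsMinOn (fun y => ⟪∑ i ∈ Icc 1 (j - 1), g i, y⟫ + ‖y - a‖ ^ 2) K (x j))
    {z : E} (hz : z ∈ K) :
    ∑ j ∈ Icc 1 n, ⟪g j, x j - z⟫ ≤ ‖z - a‖ ^ 2 + (∑ j ∈ Icc 1 n, ‖g j‖ ^ 2) / 4 := by
  have h := ftrl_sum_inner_sub_norm_sq_div_four_le hK a g x n hx n le_rfl z hz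
  simp only [sum_sub_distrib, ← sum_div, sum_inner] at h
  simp only [inner_sub_right, sum_sub_distrib]
  linarith

theorem ftrl_leader_regret_bound_general
    {d : ℕ} (K : Set (EuclideanSpace ℝ (Fin d))) (hK : Convex ℝ K)
    (D : ℝ) (hD : ∀ x ∈ K, ∀ y ∈ K, ‖x - y‖ ≤ D)
    (xs : EuclideanSpace ℝ (Fin d)) (hxs : xs ∈ K)
    (η : ℝ) (hη : 0 < η)
    (n : ℕ) (g : ℕ → EuclideanSpace ℝ (Fin d))
    (F : ℕ → EuclideanSpace ℝ (Fin d) → ℝ)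
    (hF : ∀ j, ∀ y, F j y = η * ∑ i ∈ Finset.Icc 1 j, (inner ℝ (g i) y : ℝ) + ‖y - xs‖ ^ 2)
    (xstar : ℕ → EuclideanSpace ℝ (Fin d))
    (hxstar : ∀ j ∈ Finset.Icc 1 n, xstar j ∈ K ∧ ∀ y ∈ K, F (j - 1) (xstar j) ≤ F (j - 1) y) :
    ∀ z ∈ K, ∑ j ∈ Finset.Icc 1 n, (inner ℝ (g j) (xstar j - z) : ℝ) ≤
      D ^ 2 / η + η * ∑ j ∈ Finset.Icc 1 n, ‖g j‖ ^ 2 := by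
  intro z hz
  have hFinner : ∀ j y, F j y = ⟪∑ i ∈ Icc 1 j, η • g i, y⟫ + ‖y - xs‖ ^ 2 := by
    intro j y
    rw [hF, ← smul_sum, real_inner_smul_left, sum_inner]
  simp only [hFinner] at hxstar
  have hregret := ftrl_regret_le hK xs (fun i => η • g i) xstar n
    (fun j hj => ⟨(hxstar j hj).1, isMinOn_iff.mpr (hxstar j hj).2⟩) hz
  simp only [real_inner_smul_left, norm_smul, Real.norm_of_nonneg hη.le, mul_pow,
    ← mul_sum] at hregret
  have hdiam : ‖z - xs‖ ^ 2 ≤ D ^ 2 :=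
    pow_le_pow_left₀ (norm_nonneg _) (hD z hz xs hxs) 2
  have hgsq : 0 ≤ ∑ j ∈ Icc 1 n, ‖g j‖ ^ 2 := sum_nonneg fun j _ => sq_nonneg _
  rw [div_add' _ _ _ hη.ne', le_div_iff₀ hη]
  nlinarith [mul_nonneg (sq_nonneg η) hgsq]

/-- **FTRL-style bound for the leaders.** If `x*_j` minimizes
`F_{j−1}(x) = η ∑_{i<j} ⟨g_i, x⟩ + ‖x − x_s‖²` over `K` for each `j`, then for every `x* ∈ K`,
`∑_{j=1}^n ⟨g_j, x*_j − x*⟩ ≤ D²/η + η ∑_{j=1}^n ‖g_j‖²`. -/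
theorem ftrl_leader_regret_bound
    {d : ℕ} (K : Set (EuclideanSpace ℝ (Fin d))) (hK : Convex ℝ K) (hKcpt : IsCompact K)
    (D : ℝ) (hD : ∀ x ∈ K, ∀ y ∈ K, ‖x - y‖ ≤ D)
    (xs : EuclideanSpace ℝ (Fin d)) (hxs : xs ∈ K)
    (η : ℝ) (hη : 0 < η)
    (n : ℕ) (g : ℕ → EuclideanSpace ℝ (Fin d))
    (F : ℕ → EuclideanSpace ℝ (Fin d) → ℝ)
    (hF : ∀ j, ∀ y, F j y = η * ∑ i ∈ Finset.Icc 1 j, (inner ℝ (g i) y : ℝ) + ‖y - xs‖ ^ 2)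
    (xstar : ℕ → EuclideanSpace ℝ (Fin d))
    (hxstar : ∀ j ∈ Finset.Icc 1 n, xstar j ∈ K ∧ ∀ y ∈ K, F (j - 1) (xstar j) ≤ F (j - 1) y) :
    ∀ z ∈ K, ∑ j ∈ Finset.Icc 1 n, (inner ℝ (g j) (xstar j - z) : ℝ) ≤
      D ^ 2 / η + η * ∑ j ∈ Finset.Icc 1 n, ‖g j‖ ^ 2 :=
  ftrl_leader_regret_bound_general K hK D hD xs hxs η hη n g F hF xstar hxstar
end

section
/- Let K be a nonempty set, let h₁,…,h_T : K → ℝ, and suppose that for each t = 1,…,T there is a point x*_t ∈ K that minimizes x ↦ ∑_{τ=1}^{t} h_τ(x) over K. Then ∑_{t=1}^{T} h_t(x*_t) ≤ ∑_{t=1}^{T} h_t(x) for every x ∈ K; in particular ∑_{t=1}^{T} h_t(x*_t) − min_{x ∈ K} ∑_{t=1}^{T} h_t(x) ≤ 0. -/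
/-- **follow-the-leader lemma.** If for each `t` the point `x*_t` minimizes
`x ↦ ∑_{τ=1}^t h_τ(x)` over a nonempty set `K`, then
`∑_{t=1}^T h_t(x*_t) ≤ ∑_{t=1}^T h_t(x)` for every `x ∈ K`. -/
theorem follow_the_leader_bound
    {α : Type*} (K : Set α) (hKne : K.Nonempty)
    (T : ℕ) (h : ℕ → α → ℝ)
    (xstar : ℕ → α)
    (hxstar : ∀ t ∈ Finset.Icc 1 T, xstar t ∈ K ∧
      ∀ y ∈ K, ∑ τ ∈ Finset.Icc 1 t, h τ (xstar t) ≤ ∑ τ ∈ Finset.Icc 1 t, h τ y) :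
    ∀ x ∈ K, ∑ t ∈ Finset.Icc 1 T, h t (xstar t) ≤ ∑ t ∈ Finset.Icc 1 T, h t x := by
  induction T with
  | zero => simp
  | succ n ih =>
    intro x hx
    have hsucc := hxstar (n + 1) (by simp)
    have ih' := ih (fun t ht => hxstar t (by
      simp only [Finset.mem_Icc] at ht ⊢; omega))
    have hmem : xstar (n + 1) ∈ K := hsucc.1
    have h1 : ∑ t ∈ Finset.Icc 1 n, h t (xstar t)
        ≤ ∑ t ∈ Finset.Icc 1 n, h t (xstar (n + 1)) := ih' _ hmem
    have h2 : ∑ τ ∈ Finset.Icc 1 (n + 1), h τ (xstar (n + 1))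
        ≤ ∑ τ ∈ Finset.Icc 1 (n + 1), h τ x := hsucc.2 x hx
    have hsplit : ∀ z : α, ∑ t ∈ Finset.Icc 1 (n + 1), h t z
        = ∑ t ∈ Finset.Icc 1 n, h t z + h (n + 1) z := by
      intro z
      rw [Finset.sum_Icc_succ_top (by omega)]
    calc ∑ t ∈ Finset.Icc 1 (n + 1), h t (xstar t)
        = ∑ t ∈ Finset.Icc 1 n, h t (xstar t) + h (n + 1) (xstar (n + 1)) := by
          rw [Finset.sum_Icc_succ_top (by omega)]
      _ ≤ ∑ t ∈ Finset.Icc 1 n, h t (xstar (n + 1)) + h (n + 1) (xstar (n + 1)) := by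
          linarith
      _ = ∑ t ∈ Finset.Icc 1 (n + 1), h t (xstar (n + 1)) := (hsplit _).symm
      _ ≤ ∑ t ∈ Finset.Icc 1 (n + 1), h t x := h2
end
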